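/- Let p > 0 and let (u,v) be a classical solution of the system (S₄) on ℝ⁴ such that u ≥ 0 on ℝ⁴ and the finite total mass condition ∬_{ℝ⁴×ℝ⁴} u²(x)u²(y)/|x−y|² dx dy < ∞ holds. Set α := (1/(8π²)) ∫_{ℝ⁴} P₄(y) dy (so α ∈ (0,∞)). Then there exist a constant C ∈ ℝ and R > 0 such that for every x with |x| ≥ R: (1/(8π²)) ∫_{ℝ⁴} P₄(y)·ln(|x−y|/|y|) dy ≤ α·ln|x| + C. -/

import Mathlib

open MeasureTheory Filter Topology
open scoped NNReal

noncomputable section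

abbrev E4 := EuclideanSpace ℝ (Fin 4)

/-- The normalizing constant `C₄ = (∫_{ℝ⁴} (1 − cos(2πζ₁))/|ζ|⁵ dζ)⁻¹`. -/
def C4 : ℝ := (∫ ζ : E4, (1 - Real.cos (2 * Real.pi * ζ 0)) / ‖ζ‖ ^ 5)⁻¹

/-- The assertion `(−Δ)^{1/2} w (x) = h`, i.e. the principal-value limit exists and equals `h`. -/
def HalfLapEq4 (w : E4 → ℝ) (x : E4) (h : ℝ) : Prop :=
  Tendsto (fun ε : ℝ =>
      C4 * ∫ y in {y : E4 | ε ≤ ‖y - x‖}, (w x - w y) / ‖x - y‖ ^ 5)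
    (𝓝[>] (0 : ℝ)) (𝓝 h)

/-- The Euclidean Laplacian `Δw(x) = ∑ᵢ ∂²w/∂xᵢ²`. -/
def lap4 (w : E4 → ℝ) (x : E4) : ℝ :=
  ∑ i : Fin 4,
    fderiv ℝ (fun z => fderiv ℝ w z (EuclideanSpace.single i 1)) x (EuclideanSpace.single i 1)

/-- Local Hölder continuity of a map `g`. -/
def LocHolder4 {F : Type*} [NormedAddCommGroup F] (g : E4 → F) : Prop :=
  ∀ x : E4, ∃ (C a : ℝ≥0) (r : ℝ), 0 < r ∧ 0 < (a : ℝ) ∧ (a : ℝ) ≤ 1 ∧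
    HolderOnWith C a g (Metric.ball x r)

/-- `P₄(y) = (∫ u²(z)/|y−z|² dz) · u²(y)`. -/
def P4 (u : E4 → ℝ) (y : E4) : ℝ := (∫ z : E4, u z ^ 2 / ‖y - z‖ ^ 2) * u y ^ 2

/-- `(u,v)` is a classical solution of the system (S₄) on ℝ⁴. -/
structure IsSolution4 (p : ℝ) (u v : E4 → ℝ) : Prop where
  u_C1 : ContDiff ℝ 1 u
  u_grad_holder : LocHolder4 (fderiv ℝ u)
  u_int : Integrable (fun x : E4 => |u x| / (1 + ‖x‖ ^ 5))
  v_C4 : ContDiff ℝ 4 v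
  eq_u : ∀ x : E4, HalfLapEq4 u x (Real.exp (p * v x))
  eq_v : ∀ x : E4, lap4 (fun z => lap4 v z) x = P4 u x

/-- The finite total mass condition `∬ u²(x)u²(y)/|x−y|² dx dy < ∞`. -/
def FiniteMass4 (u : E4 → ℝ) : Prop :=
  Integrable (fun q : E4 × E4 => u q.1 ^ 2 * u q.2 ^ 2 / ‖q.1 - q.2‖ ^ 2)


/-- From a positive-measure set and an a.e. property, pick a point in the set with the property. -/
lemma exists_mem_of_ae_stmt12 {Q : E4 → Prop} {s : Set E4} (hs : 0 < volume s)
    (h : ∀ᵐ y : E4, Q y) : ∃ y ∈ s, Q y := by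
  by_contra hc
  push_neg at hc
  exact absurd (measure_mono_null (fun y hy => hc y hy) (MeasureTheory.ae_iff.mp h)) hs.ne'

theorem stmt12 (p : ℝ) (hp : 0 < p) (u v : E4 → ℝ)
    (hsol : IsSolution4 p u v)
    (hu_nonneg : ∀ x : E4, 0 ≤ u x)
    (hmass : FiniteMass4 u)
    (α : ℝ) (hα : α = 1 / (8 * Real.pi ^ 2) * (∫ y : E4, P4 u y)) :
    0 < α ∧
    ∃ C R : ℝ, 0 < R ∧ ∀ x : E4, R ≤ ‖x‖ →
      1 / (8 * Real.pi ^ 2) * (∫ y : E4, P4 u y * Real.log (‖x - y‖ / ‖y‖)) ≤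
        α * Real.log ‖x‖ + C := by

  -- basic objects
  have hmass0 : Integrable (fun q : E4 × E4 => u q.1 ^ 2 * u q.2 ^ 2 / ‖q.1 - q.2‖ ^ 2)
      ((volume : Measure E4).prod volume) := by
    rw [← MeasureTheory.Measure.volume_eq_prod E4 E4]; exact hmass
  set F : E4 × E4 → ℝ := fun q => u q.1 ^ 2 * u q.2 ^ 2 / ‖q.1 - q.2‖ ^ 2 with hF
  have hP4eq : ∀ y : E4, P4 u y = ∫ z : E4, F (y, z) := by
    intro y
    rw [P4, ← integral_mul_const]
    congr 1; funext z
    simp only [hF]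
    ring
  have hP4int : Integrable (P4 u) := by
    have h := hmass0.integral_prod_left
    have he : P4 u = fun y => ∫ z : E4, F (y, z) := funext hP4eq
    rw [he]; exact h
  have hP4nn : ∀ y, 0 ≤ P4 u y := fun y =>
    mul_nonneg (integral_nonneg fun z => div_nonneg (sq_nonneg _) (by positivity)) (sq_nonneg _)
  -- u is positive somewhere
  have hune : ∃ y : E4, 0 < u y := by
    by_contra h
    push_neg at h
    have hz : ∀ y, u y = 0 := fun y => le_antisymm (h y) (hu_nonneg y)
    have h1 := hsol.eq_u 0
    simp only [HalfLapEq4] at h1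
    have h2 : (fun ε : ℝ =>
        C4 * ∫ y in {y : E4 | ε ≤ ‖y - (0:E4)‖}, (u 0 - u y) / ‖(0:E4) - y‖ ^ 5)
        = fun _ : ℝ => (0:ℝ) := by
      funext ε; simp [hz]
    rw [h2] at h1
    have h3 : Tendsto (fun _ : ℝ => (0:ℝ)) (𝓝[>] (0:ℝ)) (𝓝 0) := tendsto_const_nhds
    exact absurd (tendsto_nhds_unique h1 h3) (Real.exp_pos _).ne'
  -- positivity of the total mass
  have hIpos : 0 < ∫ y : E4, P4 u y := by
    rcases (integral_nonneg (f := P4 u) hP4nn).lt_or_eq with h | h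
    · exact h
    exfalso
    obtain ⟨y₀, hy₀⟩ := hune
    have hUopen : IsOpen (u ⁻¹' Set.Ioi 0) := isOpen_Ioi.preimage hsol.u_C1.continuous
    have hUpos : 0 < volume (u ⁻¹' Set.Ioi 0) := hUopen.measure_pos volume ⟨y₀, hy₀⟩
    have hae1 : ∀ᵐ y : E4, P4 u y = 0 := by
      have := (integral_eq_zero_iff_of_nonneg hP4nn hP4int).mp h.symm
      filter_upwards [this] with y hy using hy
    have hae2 : ∀ᵐ y : E4, Integrable (fun z : E4 => F (y, z)) := hmass0.prod_right_ae
    obtain ⟨y, hyU, hP0, hint⟩ := exists_mem_of_ae_stmt12 hUpos (hae1.and hae2)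
    have huy : 0 < u y := hyU
    have huy2 : (0:ℝ) < u y ^ 2 := by positivity
    have hkint : Integrable (fun z : E4 => u z ^ 2 / ‖y - z‖ ^ 2) := by
      have h2 := hint.div_const (u y ^ 2)
      have he : (fun z : E4 => F (y, z) / u y ^ 2) = fun z : E4 => u z ^ 2 / ‖y - z‖ ^ 2 := by
        funext z
        simp only [hF]
        rw [mul_div_assoc, mul_div_cancel_left₀ _ huy2.ne']
      rwa [he] at h2
    have hIz : ∫ z : E4, u z ^ 2 / ‖y - z‖ ^ 2 = 0 := by
      rw [P4] at hP0
      rcases mul_eq_zero.mp hP0 with h2 | h2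
      · exact h2
      · exact absurd h2 huy2.ne'
    have hzae : ∀ᵐ z : E4, u z ^ 2 / ‖y - z‖ ^ 2 = 0 := by
      have := (integral_eq_zero_iff_of_nonneg
        (fun z => div_nonneg (sq_nonneg _) (by positivity)) hkint).mp hIz
      filter_upwards [this] with z hz using hz
    have hUy : 0 < volume ((u ⁻¹' Set.Ioi 0) \ {y}) := by
      rwa [measure_diff_null (measure_singleton y)]
    obtain ⟨z, hzU, hz0⟩ := exists_mem_of_ae_stmt12 hUy hzae
    have hzy : z ≠ y := fun hzy => hzU.2 (by simp [hzy])
    have hny : ‖y - z‖ ^ 2 ≠ 0 := by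
      have h3 : 0 < ‖y - z‖ := norm_pos_iff.mpr (sub_ne_zero.mpr (Ne.symm hzy))
      exact pow_ne_zero 2 h3.ne'
    rcases div_eq_zero_iff.mp hz0 with h2 | h2
    · have : u z = 0 := by nlinarith [sq_nonneg (u z)]
      have hzpos : 0 < u z := hzU.1
      linarith
    · exact hny h2
  have hαpos : 0 < α := by
    rw [hα]
    have : (0:ℝ) < 1 / (8 * Real.pi ^ 2) := by positivity
    exact mul_pos this hIpos
  refine ⟨hαpos, 1 / (8 * Real.pi ^ 2) *
    ∫ y : E4, P4 u y * (Real.log 2 + max 0 (-Real.log ‖y‖)), 2, by norm_num, ?_⟩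
  intro x hx
  set G : E4 → ℝ := fun y => P4 u y * (Real.log 2 + max 0 (-Real.log ‖y‖)) with hG
  have hGnn : ∀ y, 0 ≤ G y := fun y =>
    mul_nonneg (hP4nn y) (add_nonneg (Real.log_nonneg one_le_two) (le_max_left _ _))
  have hlogx : 0 < Real.log ‖x‖ := Real.log_pos (by linarith)
  have hlog2 : (0:ℝ) ≤ Real.log 2 := Real.log_nonneg one_le_two
  -- pointwise bound
  have hpt : ∀ y : E4, P4 u y * Real.log (‖x - y‖ / ‖y‖) ≤ P4 u y * Real.log ‖x‖ + G y := by
    intro y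
    have hmax : (0:ℝ) ≤ max 0 (-Real.log ‖y‖) := le_max_left _ _
    have hkey : Real.log (‖x - y‖ / ‖y‖) ≤
        Real.log ‖x‖ + (Real.log 2 + max 0 (-Real.log ‖y‖)) := by
      rcases eq_or_ne (‖y‖) 0 with hy0 | hy0
      · rw [hy0]
        simp only [div_zero, Real.log_zero, neg_zero, max_self]
        linarith
      · have hby : 0 < ‖y‖ := (norm_nonneg y).lt_of_ne' hy0
        rcases eq_or_ne (‖x - y‖) 0 with ha0 | ha0
        · rw [ha0, zero_div, Real.log_zero]
          linarith
        · have hax : 0 < ‖x - y‖ := (norm_nonneg _).lt_of_ne' ha0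
          rcases le_or_gt ‖y‖ ‖x‖ with hc | hc
          · have hxpos : (0:ℝ) < ‖x‖ := by linarith
            have hle : ‖x - y‖ ≤ 2 * ‖x‖ := by
              have := norm_sub_le x y
              linarith
            have h1 : Real.log (‖x - y‖ / ‖y‖) = Real.log ‖x - y‖ - Real.log ‖y‖ :=
              Real.log_div ha0 hy0
            have h2 : Real.log ‖x - y‖ ≤ Real.log (2 * ‖x‖) := Real.log_le_log hax hle
            rw [Real.log_mul two_ne_zero hxpos.ne'] at h2
            have h3 : -Real.log ‖y‖ ≤ max 0 (-Real.log ‖y‖) := le_max_right _ _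
            linarith
          · have hle : ‖x - y‖ / ‖y‖ ≤ 2 := by
              rw [div_le_iff₀ hby]
              have := norm_sub_le x y
              linarith
            have h2 : Real.log (‖x - y‖ / ‖y‖) ≤ Real.log 2 :=
              Real.log_le_log (div_pos hax hby) hle
            linarith
    calc P4 u y * Real.log (‖x - y‖ / ‖y‖)
        ≤ P4 u y * (Real.log ‖x‖ + (Real.log 2 + max 0 (-Real.log ‖y‖))) :=
          mul_le_mul_of_nonneg_left hkey (hP4nn y)
      _ = P4 u y * Real.log ‖x‖ + G y := by rw [hG]; ring
  by_cases hf : Integrable (fun y : E4 => P4 u y * Real.log (‖x - y‖ / ‖y‖))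
  · -- the dominating function G is integrable
    have hGm : AEStronglyMeasurable G volume := by
      have hm : Measurable fun y : E4 => Real.log 2 + max 0 (-Real.log ‖y‖) :=
        measurable_const.add
          (measurable_const.max (Real.measurable_log.comp measurable_norm).neg)
      exact hP4int.aestronglyMeasurable.mul hm.aestronglyMeasurable
    have hdom : ∀ y : E4, ‖G y‖ ≤
        ‖P4 u y * Real.log 2 + |P4 u y * Real.log (‖x - y‖ / ‖y‖)|‖ := by
      intro y
      have habs : (0:ℝ) ≤ |P4 u y * Real.log (‖x - y‖ / ‖y‖)| := abs_nonneg _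
      have hgoal : P4 u y * max 0 (-Real.log ‖y‖) ≤ |P4 u y * Real.log (‖x - y‖ / ‖y‖)| := by
        rcases le_or_gt 1 ‖y‖ with hy1 | hy1
        · have : max 0 (-Real.log ‖y‖) = 0 :=
            max_eq_left (neg_nonpos.mpr (Real.log_nonneg hy1))
          rw [this, mul_zero]; exact habs
        · rcases eq_or_ne (‖y‖) 0 with hy0 | hy0
          · rw [hy0]
            simp only [Real.log_zero, neg_zero, max_self, mul_zero]
            exact abs_nonneg _
          · have hby : 0 < ‖y‖ := (norm_nonneg y).lt_of_ne' hy0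
            have hlogy : Real.log ‖y‖ < 0 := Real.log_neg hby hy1
            have hmx : max 0 (-Real.log ‖y‖) = -Real.log ‖y‖ :=
              max_eq_right (by linarith)
            have haxy : (1:ℝ) ≤ ‖x - y‖ := by
              have := norm_sub_norm_le x y
              linarith
            have hrat : 1 / ‖y‖ ≤ ‖x - y‖ / ‖y‖ := by
              apply div_le_div_of_nonneg_right ?_ ?_
              all_goals first | linarith | skip
            have hlograt : -Real.log ‖y‖ ≤ Real.log (‖x - y‖ / ‖y‖) := by
              have h1 : Real.log (1 / ‖y‖) ≤ Real.log (‖x - y‖ / ‖y‖) :=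
                Real.log_le_log (by positivity) hrat
              rw [Real.log_div one_ne_zero hy0, Real.log_one, zero_sub] at h1
              exact h1
            rw [hmx]
            calc P4 u y * -Real.log ‖y‖ ≤ P4 u y * Real.log (‖x - y‖ / ‖y‖) :=
                  mul_le_mul_of_nonneg_left hlograt (hP4nn y)
              _ ≤ |P4 u y * Real.log (‖x - y‖ / ‖y‖)| := le_abs_self _
      have h1 : G y = P4 u y * Real.log 2 + P4 u y * max 0 (-Real.log ‖y‖) := by
        rw [hG]; ring
      have h2 : 0 ≤ P4 u y * Real.log 2 := mul_nonneg (hP4nn y) hlog2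
      rw [Real.norm_eq_abs, Real.norm_eq_abs, abs_of_nonneg (hGnn y),
        abs_of_nonneg (by linarith : (0:ℝ) ≤ P4 u y * Real.log 2 +
          |P4 u y * Real.log (‖x - y‖ / ‖y‖)|)]
      linarith
    have hGint : Integrable G :=
      Integrable.mono ((hP4int.mul_const _).add hf.abs) hGm
        (Filter.Eventually.of_forall hdom)
    have hint2 : Integrable (fun y : E4 => P4 u y * Real.log ‖x‖ + G y) :=
      (hP4int.mul_const _).add hGint
    have hmono := integral_mono hf hint2 hpt
    rw [integral_add (hP4int.mul_const _) hGint, integral_mul_const] at hmono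
    have hc : (0:ℝ) ≤ 1 / (8 * Real.pi ^ 2) := by positivity
    calc 1 / (8 * Real.pi ^ 2) * ∫ y : E4, P4 u y * Real.log (‖x - y‖ / ‖y‖)
        ≤ 1 / (8 * Real.pi ^ 2) *
          ((∫ y : E4, P4 u y) * Real.log ‖x‖ + ∫ y : E4, G y) :=
          mul_le_mul_of_nonneg_left hmono hc
      _ = α * Real.log ‖x‖ + 1 / (8 * Real.pi ^ 2) * ∫ y : E4, G y := by
          rw [hα]; ring
  · rw [integral_undef hf, mul_zero]
    have h1 : 0 ≤ α * Real.log ‖x‖ := mul_nonneg hαpos.le hlogx.le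
    have h2 : 0 ≤ 1 / (8 * Real.pi ^ 2) * ∫ y : E4, G y :=
      mul_nonneg (by positivity) (integral_nonneg hGnn)
    linarith
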